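/- Fix an integer q≥3 and 0≤B<log(q−1). Let W be a random variable whose distribution is supported inside a compact interval [w',w] with w'>0, and assume w/w' ≤ 1 + log(2+√3)/(log(q−1)−B). Define 𝓕_B(t)=E[(W/E[W])·(e^{tW+B}−1)/(e^{tW+B}+q−1)] for t≥0. Then t↦𝓕_B''(t) is first positive and then negative: there exists t_*>0 such that 𝓕_B''(t)>0 for 0<t<t_* and 𝓕_B''(t)<0 for t>t_*. -/

import Mathlib

/-!
Write `c = q - 1` and `g(x) = (eˣ - 1) / (eˣ + c)` (`Potts.kernel c`), so that
`𝓕_B(t) = E[(W / E W) g(tW + B)]` and `𝓕_B''(t) = E[(W³ / E W) g''(tW + B)]`. The sign of `g''(x)`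
is that of `c - eˣ`, so `𝓕_B'' > 0` as long as `tw < log c - B`, and `𝓕_B'' < 0` as soon as
`tw' > log c - B`. For `t` in between, the ratio condition keeps every value `tW + B` within
`log (2 + √3)` of `log c`, where `g''' < 0` because the factor `e²ˣ - 4ceˣ + c²` of its numerator
has roots `c (2 ± √3)`. Hence `𝓕_B''` is strictly decreasing on that interval and changes sign
exactly once.
-/

open MeasureTheory Filter Topology Set

theorem exists_sign_change_of_strictAntiOn {f : ℝ → ℝ} {a b : ℝ} (ha : 0 < a) (hab : a ≤ b)
    (hpos : ∀ t, 0 < t → t < a → 0 < f t) (hanti : StrictAntiOn f (Icc a b))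
    (hneg : ∀ t, b < t → f t < 0) :
    ∃ s, 0 < s ∧ (∀ t, 0 < t → t < s → 0 < f t) ∧ ∀ t, s < t → f t < 0 := by
  set S := {t ∈ Icc a b | t = a ∨ 0 ≤ f t}
  have haS : a ∈ S := ⟨⟨le_rfl, hab⟩, Or.inl rfl⟩
  have hbdd : BddAbove S := ⟨b, fun t ht => ht.1.2⟩
  have has : a ≤ sSup S := le_csSup hbdd haS
  refine ⟨sSup S, ha.trans_le has, fun t ht hts => ?_, fun t hst => ?_⟩
  · rcases lt_or_ge t a with hta | hat
    · exact hpos t ht hta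
    obtain ⟨s, hs, hts'⟩ := exists_lt_of_lt_csSup ⟨a, haS⟩ hts
    have hfs : 0 ≤ f s := hs.2.resolve_left (hat.trans_lt hts').ne'
    exact hfs.trans_lt (hanti ⟨hat, hts'.le.trans hs.1.2⟩ hs.1 hts')
  · rcases lt_or_ge b t with hbt | htb
    · exact hneg t hbt
    by_contra! h
    exact (le_csSup hbdd ⟨⟨has.trans hst.le, htb⟩, Or.inr h⟩).not_gt hst

theorem abs_mul_sub_lt_of_mem_Ioo {ℓ L w' w x t : ℝ} (hw' : 0 < w') (hℓ : 0 < ℓ)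
    (hratio : w / w' ≤ 1 + L / ℓ) (hx : x ∈ Icc w' w) (ht : t ∈ Ioo (ℓ / w) (ℓ / w')) :
    |t * x - ℓ| < L := by
  obtain ⟨hx1, hx2⟩ := hx
  have hw : 0 < w := hw'.trans_le (hx1.trans hx2)
  have h1 := (div_lt_iff₀ hw).mp ht.1
  have h2 := (lt_div_iff₀ hw').mp ht.2
  have hr : ℓ * w ≤ (ℓ + L) * w' := by
    rw [div_le_iff₀ hw'] at hratio
    field_simp at hratio
    nlinarith
  rw [abs_sub_lt_iff]
  constructor <;> nlinarith

section Integral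

variable {Ω : Type*} [MeasurableSpace Ω] {μ : Measure Ω}

theorem integral_pos_of_ae_pos [NeZero μ] {f : Ω → ℝ} (hf : Integrable f μ)
    (h : ∀ᵐ ω ∂μ, 0 < f ω) : 0 < ∫ ω, f ω ∂μ := by
  rw [integral_pos_iff_support_of_nonneg_ae (h.mono fun _ hω => hω.le) hf, pos_iff_ne_zero,
    Ne, Measure.measure_support_eq_zero_iff μ]
  intro hzero
  obtain ⟨ω, hpos, hω⟩ := (h.and hzero).exists
  exact hpos.ne' hω

theorem integral_neg_of_ae_neg [NeZero μ] {f : Ω → ℝ} (hf : Integrable f μ)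
    (h : ∀ᵐ ω ∂μ, f ω < 0) : ∫ ω, f ω ∂μ < 0 := by
  simpa [integral_neg] using integral_pos_of_ae_pos hf.neg (h.mono fun _ hω => neg_pos.mpr hω)

theorem hasDerivAt_integral_mul_comp_mul_add {A W : Ω → ℝ} (hA : Integrable A μ)
    (hW : AEMeasurable W μ) {M : ℝ} (hWb : ∀ᵐ ω ∂μ, |W ω| ≤ M) {K K' : ℝ → ℝ}
    (hK : ∀ x, HasDerivAt K (K' x) x) {C C' : ℝ} (hKb : ∀ x, |K x| ≤ C)
    (hK'b : ∀ x, |K' x| ≤ C') (b t₀ : ℝ) :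
    Integrable (fun ω => A ω * W ω * K' (t₀ * W ω + b)) μ ∧
      HasDerivAt (fun t => ∫ ω, A ω * K (t * W ω + b) ∂μ)
        (∫ ω, A ω * W ω * K' (t₀ * W ω + b) ∂μ) t₀ := by
  have hK'eq : K' = deriv K := funext fun x => (hK x).deriv.symm
  have hKc : Continuous K := continuous_iff_continuousAt.mpr fun x => (hK x).continuousAt
  have hK'm : Measurable K' := hK'eq ▸ measurable_deriv K
  have hargs (t : ℝ) : AEMeasurable (fun ω => t * W ω + b) μ := (hW.const_mul t).add_const b
  refine hasDerivAt_integral_of_dominated_loc_of_deriv_le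
    (F := fun t ω => A ω * K (t * W ω + b)) (F' := fun t ω => A ω * W ω * K' (t * W ω + b))
    (bound := fun ω => |A ω| * M * C')
    (Metric.ball_mem_nhds t₀ one_pos)
    (Eventually.of_forall fun t =>
      hA.1.mul (hKc.comp_aestronglyMeasurable (hargs t).aestronglyMeasurable))
    (hA.mul_bdd (hKc.comp_aestronglyMeasurable (hargs t₀).aestronglyMeasurable)
      (Eventually.of_forall fun x => by simpa using hKb _))
    ((hA.1.mul hW.aestronglyMeasurable).mul
      (hK'm.comp_aemeasurable (hargs t₀)).aestronglyMeasurable)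
    (hWb.mono fun ω hω t _ => ?_) ((hA.abs.mul_const M).mul_const C')
    (Eventually.of_forall fun ω t _ => ?_)
  · rw [Real.norm_eq_abs, abs_mul, abs_mul]
    exact mul_le_mul (mul_le_mul_of_nonneg_left hω (abs_nonneg _)) (hK'b _) (abs_nonneg _)
      (mul_nonneg (abs_nonneg _) ((abs_nonneg _).trans hω))
  · exact (((hK _).comp t ((hasDerivAt_mul_const (W ω)).add_const b)).const_mul (A ω)).congr_deriv
      (by ring)

end Integral

namespace Potts

open Real

variable {c : ℝ}

noncomputable def kernel (c x : ℝ) : ℝ := (exp x - 1) / (exp x + c)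

noncomputable def kernel' (c x : ℝ) : ℝ := (c + 1) * exp x / (exp x + c) ^ 2

noncomputable def kernel'' (c x : ℝ) : ℝ := (c + 1) * exp x * (c - exp x) / (exp x + c) ^ 3

noncomputable def kernel''' (c x : ℝ) : ℝ :=
  (c + 1) * exp x * (exp x ^ 2 - 4 * c * exp x + c ^ 2) / (exp x + c) ^ 4

theorem exp_add_pos_of_nonneg (hc : 0 ≤ c) (x : ℝ) : 0 < exp x + c :=
  add_pos_of_pos_of_nonneg (exp_pos x) hc

theorem hasDerivAt_kernel (hc : 0 ≤ c) (x : ℝ) : HasDerivAt (kernel c) (kernel' c x) x := by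
  have hd := (exp_add_pos_of_nonneg hc x).ne'
  refine (((hasDerivAt_exp x).sub_const 1).div ((hasDerivAt_exp x).add_const c) hd).congr_deriv ?_
  rw [kernel']
  field_simp
  ring

theorem hasDerivAt_kernel' (hc : 0 ≤ c) (x : ℝ) : HasDerivAt (kernel' c) (kernel'' c x) x := by
  have hd := (exp_add_pos_of_nonneg hc x).ne'
  refine (((hasDerivAt_exp x).const_mul (c + 1)).div
    (((hasDerivAt_exp x).add_const c).pow 2) (pow_ne_zero 2 hd)).congr_deriv ?_
  rw [kernel'']
  simp only [Pi.pow_apply]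
  field_simp
  ring

theorem hasDerivAt_kernel'' (hc : 0 ≤ c) (x : ℝ) : HasDerivAt (kernel'' c) (kernel''' c x) x := by
  have hd := (exp_add_pos_of_nonneg hc x).ne'
  refine ((((hasDerivAt_exp x).const_mul (c + 1)).mul ((hasDerivAt_exp x).const_sub c)).div
    (((hasDerivAt_exp x).add_const c).pow 3) (pow_ne_zero 3 hd)).congr_deriv ?_
  rw [kernel''']
  simp only [Pi.pow_apply, Pi.mul_apply]
  field_simp
  ring

theorem kernel''_eq_kernel'_mul (hc : 0 ≤ c) (x : ℝ) :
    kernel'' c x = kernel' c x * ((c - exp x) / (exp x + c)) := by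
  have hd := (exp_add_pos_of_nonneg hc x).ne'
  rw [kernel'', kernel']
  field_simp

theorem kernel'''_eq_kernel'_mul (hc : 0 ≤ c) (x : ℝ) :
    kernel''' c x = kernel' c x * ((exp x ^ 2 - 4 * c * exp x + c ^ 2) / (exp x + c) ^ 2) := by
  have hd := (exp_add_pos_of_nonneg hc x).ne'
  rw [kernel''', kernel']
  field_simp

theorem abs_kernel_le_one (hc : 1 ≤ c) (x : ℝ) : |kernel c x| ≤ 1 := by
  have := exp_pos x
  have hc0 : 0 ≤ c := by linarith
  have hd := exp_add_pos_of_nonneg hc0 x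
  rw [kernel, abs_div, abs_of_pos hd, div_le_one hd]
  exact abs_le.mpr ⟨by linarith, by linarith⟩

theorem abs_kernel'_le_one (hc : 1 ≤ c) (x : ℝ) : |kernel' c x| ≤ 1 := by
  have := exp_pos x
  have hc0 : 0 ≤ c := by linarith
  have hd := exp_add_pos_of_nonneg hc0 x
  rw [kernel', abs_of_pos (by positivity), div_le_one (by positivity)]
  nlinarith

theorem abs_kernel''_le_one (hc : 1 ≤ c) (x : ℝ) : |kernel'' c x| ≤ 1 := by
  have := exp_pos x
  have hc0 : 0 ≤ c := by linarith
  have hd := exp_add_pos_of_nonneg hc0 x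
  rw [kernel''_eq_kernel'_mul hc0, abs_mul]
  refine mul_le_one₀ (abs_kernel'_le_one hc x) (abs_nonneg _) ?_
  rw [abs_div, abs_of_pos hd, div_le_one hd]
  exact abs_le.mpr ⟨by linarith, by linarith⟩

theorem abs_kernel'''_le_one (hc : 1 ≤ c) (x : ℝ) : |kernel''' c x| ≤ 1 := by
  have := exp_pos x
  have hc0 : 0 ≤ c := by linarith
  have hd := exp_add_pos_of_nonneg hc0 x
  rw [kernel'''_eq_kernel'_mul hc0, abs_mul]
  refine mul_le_one₀ (abs_kernel'_le_one hc x) (abs_nonneg _) ?_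
  rw [abs_div, abs_of_pos (pow_pos hd 2), div_le_one (pow_pos hd 2)]
  exact abs_le.mpr ⟨by nlinarith [sq_nonneg (exp x - c)], by nlinarith [mul_pos this hd]⟩

theorem kernel''_pos (hc : 0 < c) {x : ℝ} (hx : x < log c) : 0 < kernel'' c x := by
  have : exp x < c := (lt_log_iff_exp_lt hc).mp hx
  have := exp_pos x
  unfold kernel''
  exact div_pos (mul_pos (by positivity) (by linarith)) (by positivity)

theorem kernel''_neg (hc : 0 < c) {x : ℝ} (hx : log c < x) : kernel'' c x < 0 := by
  have : c < exp x := (log_lt_iff_lt_exp hc).mp hx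
  have := exp_pos x
  unfold kernel''
  exact div_neg_of_neg_of_pos (mul_neg_of_pos_of_neg (by positivity) (by linarith)) (by positivity)

theorem kernel'''_neg (hc : 0 < c) {x : ℝ} (hx : |x - log c| < log (2 + √3)) :
    kernel''' c x < 0 := by
  have h3 : √3 ^ 2 = 3 := sq_sqrt (by norm_num)
  have hs : 0 < 2 + √3 := by positivity
  set v := exp (x - log c) with hv
  have hexp : exp x = c * v := by rw [hv, exp_sub, exp_log hc]; field_simp
  obtain ⟨hlo, hhi⟩ := abs_sub_lt_iff.mp hx
  have hvhi : v < 2 + √3 := by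
    rw [hv, ← exp_log hs]; exact exp_lt_exp.mpr (by linarith)
  -- `2 ± √3` are the roots of `v ^ 2 - 4 * v + 1`, and `2 - √3 = (2 + √3)⁻¹`
  have hvlo : 2 - √3 < v := by
    have : 2 - √3 = exp (-log (2 + √3)) := by
      rw [exp_neg, exp_log hs]; field_simp; nlinarith
    rw [this, hv]; exact exp_lt_exp.mpr (by linarith)
  have hquad : exp x ^ 2 - 4 * c * exp x + c ^ 2 < 0 := by
    have : v ^ 2 - 4 * v + 1 < 0 := by nlinarith [mul_pos (sub_pos.mpr hvlo) (sub_pos.mpr hvhi)]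
    rw [hexp]
    nlinarith [mul_pos hc hc]
  have := exp_pos x
  unfold kernel'''
  exact div_neg_of_neg_of_pos (mul_neg_of_pos_of_neg (by positivity) hquad) (by positivity)

variable {Ω : Type*} [MeasurableSpace Ω] {μ : Measure Ω} {A W : Ω → ℝ}

theorem deriv_deriv_integral_kernel (hA : Integrable A μ) (hW : AEMeasurable W μ) {M : ℝ}
    (hWb : ∀ᵐ ω ∂μ, |W ω| ≤ M) (hc : 1 ≤ c) (B : ℝ) :
    deriv (deriv fun t => ∫ ω, A ω * kernel c (t * W ω + B) ∂μ) =
      fun t => ∫ ω, A ω * W ω * W ω * kernel'' c (t * W ω + B) ∂μ := by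
  have hc0 : 0 ≤ c := by linarith
  have hAW : Integrable (fun ω => A ω * W ω) μ :=
    hA.mul_bdd hW.aestronglyMeasurable (hWb.mono fun _ h => by simpa using h)
  have d1 (t : ℝ) := (hasDerivAt_integral_mul_comp_mul_add hA hW hWb (hasDerivAt_kernel hc0)
    (abs_kernel_le_one hc) (abs_kernel'_le_one hc) B t).2
  have d2 (t : ℝ) := (hasDerivAt_integral_mul_comp_mul_add hAW hW hWb (hasDerivAt_kernel' hc0)
    (abs_kernel'_le_one hc) (abs_kernel''_le_one hc) B t).2
  funext t
  rw [funext fun t => (d1 t).deriv]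
  exact (d2 t).deriv

theorem exists_sign_change_deriv_deriv_integral_kernel [NeZero μ] (hA : Integrable A μ)
    (hApos : ∀ᵐ ω ∂μ, 0 < A ω) (hW : AEMeasurable W μ) {w' w : ℝ} (hw' : 0 < w')
    (hsupp : ∀ᵐ ω ∂μ, W ω ∈ Icc w' w) (hc : 1 ≤ c) {B : ℝ} (hB : B < log c)
    (hratio : w / w' ≤ 1 + log (2 + √3) / (log c - B)) :
    ∃ s, 0 < s ∧
      (∀ t, 0 < t → t < s → 0 < deriv (deriv fun t => ∫ ω, A ω * kernel c (t * W ω + B) ∂μ) t) ∧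
      ∀ t, s < t → deriv (deriv fun t => ∫ ω, A ω * kernel c (t * W ω + B) ∂μ) t < 0 := by
  have hc0 : 0 < c := by linarith
  have hℓ : 0 < log c - B := sub_pos.mpr hB
  have hww : w' ≤ w := by obtain ⟨ω, hω⟩ := hsupp.exists; exact hω.1.trans hω.2
  have hw : 0 < w := hw'.trans_le hww
  have hWb : ∀ᵐ ω ∂μ, |W ω| ≤ w :=
    hsupp.mono fun ω h => (abs_of_pos (hw'.trans_le h.1)).trans_le h.2
  have hWWpos : ∀ᵐ ω ∂μ, 0 < A ω * W ω * W ω := by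
    filter_upwards [hApos, hsupp] with ω hA hx
    have := hw'.trans_le hx.1
    positivity
  have hAW : Integrable (fun ω => A ω * W ω) μ :=
    hA.mul_bdd hW.aestronglyMeasurable (hWb.mono fun _ h => by simpa using h)
  have hAWW : Integrable (fun ω => A ω * W ω * W ω) μ :=
    hAW.mul_bdd hW.aestronglyMeasurable (hWb.mono fun _ h => by simpa using h)
  have d2 (t : ℝ) := hasDerivAt_integral_mul_comp_mul_add hAW hW hWb (hasDerivAt_kernel' hc0.le)
    (abs_kernel'_le_one hc) (abs_kernel''_le_one hc) B t
  have d3 (t : ℝ) := hasDerivAt_integral_mul_comp_mul_add hAWW hW hWb (hasDerivAt_kernel'' hc0.le)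
    (abs_kernel''_le_one hc) (abs_kernel'''_le_one hc) B t
  rw [deriv_deriv_integral_kernel hA hW hWb hc B]
  refine exists_sign_change_of_strictAntiOn (div_pos hℓ hw)
    (div_le_div_of_nonneg_left hℓ.le hw' hww) (fun t ht hta => ?_) ?_ (fun t htb => ?_)
  · refine integral_pos_of_ae_pos (d2 t).1 ?_
    filter_upwards [hWWpos, hsupp] with ω hpos hx
    refine mul_pos hpos (kernel''_pos hc0 ?_)
    have : t * W ω < log c - B :=
      (mul_le_mul_of_nonneg_left hx.2 ht.le).trans_lt ((lt_div_iff₀ hw).mp hta)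
    linarith
  · refine strictAntiOn_of_deriv_neg (convex_Icc _ _)
      (fun t _ => (d3 t).2.continuousAt.continuousWithinAt) fun t ht => ?_
    rw [interior_Icc] at ht
    rw [(d3 t).2.deriv]
    refine integral_neg_of_ae_neg (d3 t).1 ?_
    filter_upwards [hWWpos, hsupp] with ω hpos hx
    refine mul_neg_of_pos_of_neg (mul_pos hpos (hw'.trans_le hx.1)) (kernel'''_neg hc0 ?_)
    have := abs_mul_sub_lt_of_mem_Ioo hw' hℓ hratio hx ht
    rwa [show t * W ω + B - log c = t * W ω - (log c - B) by ring]
  · refine integral_neg_of_ae_neg (d2 t).1 ?_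
    filter_upwards [hWWpos, hsupp] with ω hpos hx
    refine mul_neg_of_pos_of_neg hpos (kernel''_neg hc0 ?_)
    have ht : 0 < t := (div_pos hℓ hw').trans htb
    have : log c - B < t * W ω :=
      ((div_lt_iff₀ hw').mp htb).trans_le (mul_le_mul_of_nonneg_left hx.1 ht.le)
    linarith

end Potts

/-- The function `𝓕_B(t) = E[(W/E[W])·(e^{tW+B}−1)/(e^{tW+B}+q−1)]`. -/
noncomputable def Ffun {Ω : Type*} [MeasurableSpace Ω] (μ : Measure Ω)
    (W : Ω → ℝ) (q : ℕ) (B : ℝ) (t : ℝ) : ℝ :=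
  ∫ ω, (W ω / (∫ ω', W ω' ∂μ)) * (Real.exp (t * W ω + B) - 1) /
    (Real.exp (t * W ω + B) + q - 1) ∂μ

theorem small_support_zero_crossing_general
    {Ω : Type*} [MeasurableSpace Ω] (μ : Measure Ω) [IsProbabilityMeasure μ]
    (W : Ω → ℝ) (hWmeas : Measurable W)
    (q : ℕ) (hq : 3 ≤ q) (B : ℝ) (hB1 : B < Real.log (q - 1))
    (w' w : ℝ) (hw' : 0 < w') (hsupp : ∀ᵐ ω ∂μ, W ω ∈ Icc w' w)
    (hratio : w / w' ≤ 1 + Real.log (2 + Real.sqrt 3) / (Real.log (q - 1) - B)) :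
    ∃ tstar : ℝ, 0 < tstar ∧
      (∀ t : ℝ, 0 < t → t < tstar → 0 < deriv (deriv (Ffun μ W q B)) t) ∧
      (∀ t : ℝ, tstar < t → deriv (deriv (Ffun μ W q B)) t < 0) := by
  have hWpos : ∀ᵐ ω ∂μ, 0 < W ω := hsupp.mono fun ω h => hw'.trans_le h.1
  have hWint : Integrable W μ := Integrable.of_bound hWmeas.aestronglyMeasurable w
    (hsupp.mono fun ω h => (Real.norm_of_nonneg (hw'.trans_le h.1).le).trans_le h.2)
  have hI : 0 < ∫ ω, W ω ∂μ := integral_pos_of_ae_pos hWint hWpos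
  have hc : (1 : ℝ) ≤ q - 1 := by
    have : (3 : ℝ) ≤ q := by exact_mod_cast hq
    linarith
  have hF : Ffun μ W q B =
      fun t => ∫ ω, (W ω / ∫ ω', W ω' ∂μ) * Potts.kernel (q - 1) (t * W ω + B) ∂μ := by
    funext t
    simp only [Ffun, Potts.kernel, mul_div_assoc, add_sub_assoc]
  rw [hF]
  exact Potts.exists_sign_change_deriv_deriv_integral_kernel (hWint.div_const _)
    (hWpos.mono fun ω h => div_pos h hI) hWmeas.aemeasurable hw' hsupp hc hB1 hratio

/-- **Weights with small support** satisfy the unique zero-crossing condition: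
`𝓕_B''` is first positive and then negative. -/
theorem small_support_zero_crossing
    {Ω : Type*} [MeasurableSpace Ω] (μ : Measure Ω) [IsProbabilityMeasure μ]
    (W : Ω → ℝ) (hWmeas : Measurable W)
    (q : ℕ) (hq : 3 ≤ q) (B : ℝ) (hB0 : 0 ≤ B) (hB1 : B < Real.log (q - 1))
    (w' w : ℝ) (hw' : 0 < w') (hsupp : ∀ᵐ ω ∂μ, W ω ∈ Icc w' w)
    (hratio : w / w' ≤ 1 + Real.log (2 + Real.sqrt 3) / (Real.log (q - 1) - B)) :
    ∃ tstar : ℝ, 0 < tstar ∧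
      (∀ t : ℝ, 0 < t → t < tstar → 0 < deriv (deriv (Ffun μ W q B)) t) ∧
      (∀ t : ℝ, tstar < t → deriv (deriv (Ffun μ W q B)) t < 0) :=
  small_support_zero_crossing_general μ W hWmeas q hq B hB1 w' w hw' hsupp hratio
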